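/- For every real number q with q > 0 and q ≠ 1, every natural number N, and every integer n with 0 ≤ n ≤ N, the following identity holds: (−1)^n q^{2Nn − n(n−1)} · ((q^{−2N};q^2)_n / (q^2;q^2)_n) · Σ_{k=0}^{N−n} q^{2(N−n+1)k} (q^{−2(N−n)};q^2)_k / ((q^2;q^2)_k · (n+k+1)_{q^2}) = 1/(N+1)_{q^2}. (With N = 2j, this is the scalar content of the resolution of unity (2j+1)_{q^2} H[|x,z⟩⟨x,z|] = 1 for the SU_q(2) coherent states of spin j, after the Haar functional values H[ζ^m] = q^{2m}/(m+1)_{q^2} have been inserted.) -/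

import Mathlib

/-!
Write `Q = q²`. Both the prefactor and the summands are turned into Gaussian binomials by
`Q^{Nn} (Q^{-N};Q)_n (Q;Q)_{N-n} = (-1)^n Q^{n(n-1)/2} (Q;Q)_N`, which reduces the identity to
`S(n, M) = (Q;Q)_n (Q;Q)_M / (Q;Q)_{n+M+1}` for the q-analogue
`S(n, M) = ∑_k (-1)^k Q^{k(k+1)/2} [M choose k]_Q / (1 - Q^{n+k+1})` of the Beta integral
`∑_k (-1)^k (M choose k) / (n+k+1) = n! M! / (n+M+1)!`.
The q-Pascal rule gives `S(n, M+1) = S(n, M) - Q^{M+1} S(n+1, M)`, and the closed form satisfies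
the same recursion.
-/

/-- The q-shifted factorial `(a;q)_n = ∏_{i=0}^{n-1} (1 - a q^i)`. -/
def qPoch (a q : ℝ) (n : ℕ) : ℝ := ∏ i ∈ Finset.range n, (1 - a * q ^ i)

/-- The q-number `(n)_q = (1 - q^n)/(1 - q)`. -/
noncomputable def qNum (q : ℝ) (n : ℕ) : ℝ := (1 - q ^ n) / (1 - q)

lemma qPoch_zero (a q : ℝ) : qPoch a q 0 = 1 := rfl

lemma qPoch_succ (a q : ℝ) (n : ℕ) : qPoch a q (n + 1) = qPoch a q n * (1 - a * q ^ n) :=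
  Finset.prod_range_succ _ _

lemma qPoch_self_succ (q : ℝ) (n : ℕ) :
    qPoch q q (n + 1) = qPoch q q n * (1 - q ^ (n + 1)) := by
  rw [qPoch_succ, pow_succ']

lemma one_sub_pow_ne_zero {q : ℝ} (hq : ∀ m ≠ 0, q ^ m ≠ 1) {m : ℕ} (hm : m ≠ 0) :
    1 - q ^ m ≠ 0 :=
  sub_ne_zero.2 (hq m hm).symm

lemma qPoch_self_ne_zero {q : ℝ} (hq : ∀ m ≠ 0, q ^ m ≠ 1) (n : ℕ) :
    qPoch q q n ≠ 0 := by
  induction n with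
  | zero => exact one_ne_zero
  | succ n ih =>
    rw [qPoch_self_succ]
    exact mul_ne_zero ih (one_sub_pow_ne_zero hq n.succ_ne_zero)

lemma pow_mul_qPoch_zpow_neg {q : ℝ} (hq : q ≠ 0) (n d : ℕ) :
    q ^ ((n + d) * n) * qPoch (q ^ (-((n + d : ℕ) : ℤ))) q n * qPoch q q d
      = (-1) ^ n * q ^ n.choose 2 * qPoch q q (n + d) := by
  induction n generalizing d with
  | zero => simp [qPoch_zero]
  | succ n ih =>
    have hfactor : q ^ (n + (d + 1)) * (1 - q ^ (-((n + (d + 1) : ℕ) : ℤ)) * q ^ n)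
        = -q ^ n * (1 - q ^ (d + 1)) := by
      rw [pow_add, Nat.cast_add, neg_add, zpow_add₀ hq, zpow_neg, zpow_natCast, zpow_neg,
        zpow_natCast]
      field_simp
      ring
    have ih' := ih (d + 1)
    rw [qPoch_self_succ q d] at ih'
    rw [show n + 1 + d = n + (d + 1) by ring, qPoch_succ, Nat.choose_succ_succ',
      Nat.choose_one_right]
    linear_combination
      (q ^ ((n + (d + 1)) * n) * qPoch (q ^ (-((n + (d + 1) : ℕ) : ℤ))) q n * qPoch q q d) *
        hfactor - q ^ n * ih'

/-- Junk (not `0`) for `k > n`, because of truncated subtraction. -/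
noncomputable def qBinom (q : ℝ) (n k : ℕ) : ℝ :=
  qPoch q q n / (qPoch q q k * qPoch q q (n - k))

lemma qBinom_zero_right {q : ℝ} (hq : ∀ m ≠ 0, q ^ m ≠ 1) (n : ℕ) : qBinom q n 0 = 1 := by
  rw [qBinom, qPoch_zero, one_mul, Nat.sub_zero, div_self (qPoch_self_ne_zero hq n)]

lemma qBinom_self {q : ℝ} (hq : ∀ m ≠ 0, q ^ m ≠ 1) (n : ℕ) : qBinom q n n = 1 := by
  rw [qBinom, Nat.sub_self, qPoch_zero, mul_one, div_self (qPoch_self_ne_zero hq n)]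

lemma qBinom_succ_succ {q : ℝ} (hq : ∀ m ≠ 0, q ^ m ≠ 1) {n k : ℕ} (hk : k < n) :
    qBinom q (n + 1) (k + 1) = qBinom q n (k + 1) + q ^ (n - k) * qBinom q n k := by
  obtain ⟨d, rfl⟩ := Nat.exists_eq_add_of_lt hk
  rw [qBinom, qBinom, qBinom, show k + d + 1 + 1 - (k + 1) = d + 1 by omega,
    show k + d + 1 - (k + 1) = d by omega, show k + d + 1 - k = d + 1 by omega,
    qPoch_self_succ _ (k + d + 1), qPoch_self_succ _ k, qPoch_self_succ _ d]
  have := qPoch_self_ne_zero hq k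
  have := qPoch_self_ne_zero hq d
  have := qPoch_self_ne_zero hq (k + d + 1)
  have := one_sub_pow_ne_zero hq k.succ_ne_zero
  have := one_sub_pow_ne_zero hq d.succ_ne_zero
  field_simp
  ring

noncomputable def qBetaTerm (q : ℝ) (n m k : ℕ) : ℝ :=
  (-1) ^ k * q ^ (k + 1).choose 2 * qBinom q m k / (1 - q ^ (n + k + 1))

noncomputable def qBetaSum (q : ℝ) (n m : ℕ) : ℝ :=
  ∑ k ∈ Finset.range (m + 1), qBetaTerm q n m k

lemma qBetaTerm_succ_zero {q : ℝ} (hq : ∀ m ≠ 0, q ^ m ≠ 1) (n m : ℕ) :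
    qBetaTerm q n (m + 1) 0 = qBetaTerm q n m 0 := by
  simp only [qBetaTerm, qBinom_zero_right hq]

lemma qBetaTerm_succ_succ {q : ℝ} (hq : ∀ m ≠ 0, q ^ m ≠ 1) (n : ℕ) {m k : ℕ}
    (hk : k < m) :
    qBetaTerm q n (m + 1) (k + 1)
      = qBetaTerm q n m (k + 1) - q ^ (m + 1) * qBetaTerm q (n + 1) m k := by
  rw [qBetaTerm, qBetaTerm, qBetaTerm, qBinom_succ_succ hq hk, Nat.choose_succ_succ' (k + 1),
    Nat.choose_one_right, show n + (k + 1) + 1 = n + 1 + k + 1 by ring,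
    show m + 1 = k + 1 + (m - k) by omega]
  ring

lemma qBetaTerm_succ_self {q : ℝ} (hq : ∀ m ≠ 0, q ^ m ≠ 1) (n m : ℕ) :
    qBetaTerm q n (m + 1) (m + 1) = -q ^ (m + 1) * qBetaTerm q (n + 1) m m := by
  rw [qBetaTerm, qBetaTerm, qBinom_self hq, qBinom_self hq, Nat.choose_succ_succ' (m + 1),
    Nat.choose_one_right, show n + (m + 1) + 1 = n + 1 + m + 1 by ring]
  ring

lemma qBetaSum_succ {q : ℝ} (hq : ∀ m ≠ 0, q ^ m ≠ 1) (n m : ℕ) :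
    qBetaSum q n (m + 1) = qBetaSum q n m - q ^ (m + 1) * qBetaSum q (n + 1) m := by
  rw [qBetaSum, Finset.sum_range_succ', Finset.sum_range_succ, qBetaTerm_succ_zero hq,
    qBetaTerm_succ_self hq, Finset.sum_congr rfl fun k hk =>
      qBetaTerm_succ_succ hq n (Finset.mem_range.1 hk),
    Finset.sum_sub_distrib, ← Finset.mul_sum, qBetaSum, qBetaSum,
    Finset.sum_range_succ' (qBetaTerm q n m), Finset.sum_range_succ (qBetaTerm q (n + 1) m)]
  ring

lemma qBetaSum_eq {q : ℝ} (hq : ∀ m ≠ 0, q ^ m ≠ 1) (n m : ℕ) :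
    qBetaSum q n m = qPoch q q n * qPoch q q m / qPoch q q (n + m + 1) := by
  induction m generalizing n with
  | zero =>
    simp [qBetaSum, qBetaTerm, qBinom_self hq, qPoch_zero, qPoch_self_succ,
      div_mul_cancel_left₀ (qPoch_self_ne_zero hq n)]
  | succ m ih =>
    rw [qBetaSum_succ hq, ih, ih, show n + 1 + m + 1 = n + m + 1 + 1 by ring,
      show n + (m + 1) + 1 = n + m + 1 + 1 by ring, qPoch_self_succ _ n, qPoch_self_succ _ m,
      qPoch_self_succ _ (n + m + 1)]
    have := qPoch_self_ne_zero hq n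
    have := qPoch_self_ne_zero hq (n + m + 1)
    have := one_sub_pow_ne_zero hq (n + m + 1).succ_ne_zero
    field_simp
    ring

lemma pow_mul_qPoch_zpow_neg_div_eq_qBetaTerm {q : ℝ} (hq₀ : q ≠ 0)
    (hq : ∀ m ≠ 0, q ^ m ≠ 1) (n : ℕ) {m k : ℕ} (hk : k ≤ m) :
    q ^ ((m + 1) * k) * qPoch (q ^ (-(m : ℤ))) q k / (qPoch q q k * qNum q (n + k + 1))
      = (1 - q) * qBetaTerm q n m k := by
  obtain ⟨d, rfl⟩ := Nat.exists_eq_add_of_le hk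
  rw [qBetaTerm, qBinom, qNum, Nat.add_sub_cancel_left, Nat.choose_succ_succ',
    Nat.choose_one_right, show (k + d + 1) * k = (k + d) * k + k by ring]
  have := qPoch_self_ne_zero hq k
  have := qPoch_self_ne_zero hq d
  have := one_sub_pow_ne_zero hq (n + k).succ_ne_zero
  have := pow_one q ▸ one_sub_pow_ne_zero hq one_ne_zero
  field_simp
  linear_combination q ^ k * pow_mul_qPoch_zpow_neg hq₀ k d

theorem prefactor_mul_sum_eq_one_div_qNum {q : ℝ} (hq₀ : q ≠ 0)
    (hq : ∀ m ≠ 0, q ^ m ≠ 1) {N n : ℕ} (hn : n ≤ N) :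
    (-1) ^ n * (q ^ (N * n) / q ^ n.choose 2) * (qPoch (q ^ (-(N : ℤ))) q n / qPoch q q n) *
        ∑ k ∈ Finset.range (N - n + 1),
          q ^ ((N - n + 1) * k) * qPoch (q ^ (-((N - n : ℕ) : ℤ))) q k /
            (qPoch q q k * qNum q (n + k + 1))
      = 1 / qNum q (N + 1) := by
  obtain ⟨m, rfl⟩ := Nat.exists_eq_add_of_le hn
  rw [Nat.add_sub_cancel_left, Finset.sum_congr rfl fun k hk =>
    pow_mul_qPoch_zpow_neg_div_eq_qBetaTerm hq₀ hq n (Nat.lt_succ_iff.1 (Finset.mem_range.1 hk)),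
    ← Finset.mul_sum, ← qBetaSum, qBetaSum_eq hq, qNum, qPoch_self_succ]
  have := qPoch_self_ne_zero hq n
  have := qPoch_self_ne_zero hq m
  have := qPoch_self_ne_zero hq (n + m)
  have := one_sub_pow_ne_zero hq (n + m).succ_ne_zero
  have := pow_one q ▸ one_sub_pow_ne_zero hq one_ne_zero
  have hsign : ((-1 : ℝ) ^ n) ^ 2 = 1 := by rw [← pow_mul, pow_mul', neg_one_sq, one_pow]
  field_simp
  linear_combination
    (-1) ^ n * pow_mul_qPoch_zpow_neg hq₀ n m + q ^ n.choose 2 * qPoch q q (n + m) * hsign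

lemma two_mul_choose_two (n : ℕ) : (2 * n.choose 2 : ℤ) = n * (n - 1) := by
  have := Nat.cast_choose_two ℚ n
  qify
  linarith

/-- with `N = 2j`, the scalar content of the resolution of unity
`(2j+1)_{q²} H[|x,z⟩⟨x,z|] = 1` for the `SU_q(2)` coherent states:
`(−1)^n q^{2Nn−n(n−1)} ((q^{−2N};q²)_n/(q²;q²)_n) ·
 Σ_{k=0}^{N−n} q^{2(N−n+1)k} (q^{−2(N−n)};q²)_k/((q²;q²)_k (n+k+1)_{q²}) = 1/(N+1)_{q²}`. -/
theorem resolution_of_unity_scalar (q : ℝ) (hq : 0 < q) (hq1 : q ≠ 1) (N n : ℕ)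
    (hn : n ≤ N) :
    (-1) ^ n * q ^ (2 * (N : ℤ) * (n : ℤ) - (n : ℤ) * ((n : ℤ) - 1)) *
        (qPoch (q ^ (-2 * (N : ℤ))) (q ^ 2) n / qPoch (q ^ 2) (q ^ 2) n) *
        ∑ k ∈ Finset.range (N - n + 1),
          q ^ (2 * (N - n + 1) * k) * qPoch (q ^ (-2 * ((N : ℤ) - (n : ℤ)))) (q ^ 2) k /
            (qPoch (q ^ 2) (q ^ 2) k * qNum (q ^ 2) (n + k + 1))
      = 1 / qNum (q ^ 2) (N + 1) := by
  have hQ : ∀ m ≠ 0, (q ^ 2) ^ m ≠ 1 := fun m hm h =>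
    hq1 <| (pow_eq_one_iff_of_nonneg hq.le (mul_ne_zero two_ne_zero hm)).1 (by rwa [pow_mul])
  have zpow_two_mul (z : ℤ) : q ^ (2 * z) = (q ^ 2) ^ z := by rw [zpow_mul, zpow_ofNat]
  have zpow_neg_two_mul (z : ℤ) : q ^ (-2 * z) = (q ^ 2) ^ (-z) := by
    rw [neg_mul, ← mul_neg, zpow_two_mul]
  have hprefactor :
      q ^ (2 * (N : ℤ) * n - n * (n - 1)) = (q ^ 2) ^ (N * n) / (q ^ 2) ^ n.choose 2 := by
    rw [← two_mul_choose_two, show 2 * (N : ℤ) * n - 2 * n.choose 2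
        = 2 * (((N * n : ℕ) : ℤ) - (n.choose 2 : ℕ)) by push_cast; ring,
      zpow_two_mul, zpow_sub₀ (pow_ne_zero 2 hq.ne'), zpow_natCast, zpow_natCast]
  rw [hprefactor, zpow_neg_two_mul, show (N : ℤ) - n = ((N - n : ℕ) : ℤ) by omega,
    zpow_neg_two_mul]
  simp only [mul_assoc 2, pow_mul q 2]
  exact prefactor_mul_sum_eq_one_div_qNum (pow_ne_zero 2 hq.ne') hQ hn
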